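/- arXiv:2301.06760 — 2 statements merged into one kernel-verified Lean document; each statement's English description precedes it below -/
import Mathlib

section
/- Let (P_n)_{n≥0} be a monic OPS with respect to a regular linear functional u on ℂ[X], with three-term recurrence coefficients (B_n)_{n≥0} and (C_n)_{n≥1}. Suppose there exist a polynomial φ of degree at most 2 and a monic polynomial ψ of degree 1 satisfying the distributional Pearson equation 𝐃_q(φu) = 𝐒_q(ψu), i.e. u(φ·(𝒟_q f) + ψ·(𝒮_q f)) = 0 for every polynomial f ∈ ℂ[X]. Then ψ(x) = x − B_0 and φ(x) = (𝔞x − 𝔟)(x − B_0) − (𝔞 + α)C_1, where 𝔞 = α(3 − 4α²)/(4α² − 1) + [(B_0 + B_1)² + 4α²(C_1 − B_0B_1 + α² − 1)]/(2α(4α² − 1)C_2) and 𝔟 = (𝔞 + α)B_1 − (B_0 + B_1)/(2α). -/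
open Polynomial

/-- `q^{1/2}` as a complex number, for a real base `q`. -/
noncomputable def sqC (q : ℝ) : ℂ := (Real.sqrt q : ℂ)

/-- `α = (q^{1/2} + q^{-1/2})/2`. -/
noncomputable def alphaC (q : ℝ) : ℂ := (sqC q + (sqC q)⁻¹) / 2

/-- `AWRel q f g` means that `g = 𝒟_q f`, i.e. `g` satisfies the defining relation of the
Askey-Wilson operator applied to `f`. -/
def AWRel (q : ℝ) (f g : ℂ[X]) : Prop :=
  ∀ z : ℂ, z ≠ 0 →
    g.eval ((z + z⁻¹) / 2) * ((sqC q - (sqC q)⁻¹) * (z - z⁻¹) / 2) =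
      f.eval ((sqC q * z + (sqC q)⁻¹ * z⁻¹) / 2) -
        f.eval (((sqC q)⁻¹ * z + sqC q * z⁻¹) / 2)

/-- `AvgRel q f g` means that `g = 𝒮_q f`, i.e. `g` satisfies the defining relation of the
averaging operator applied to `f`. -/
def AvgRel (q : ℝ) (f g : ℂ[X]) : Prop :=
  ∀ z : ℂ, z ≠ 0 →
    g.eval ((z + z⁻¹) / 2) =
      (f.eval ((sqC q * z + (sqC q)⁻¹ * z⁻¹) / 2) +
        f.eval (((sqC q)⁻¹ * z + sqC q * z⁻¹) / 2)) / 2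

lemma awD1' (s t z w : ℂ) (h1 : s*t=1) (h2 : z*w=1) :
    (1:ℂ) * ((s - t) * (z - w) / 2) = (s*z + t*w)/2 - (t*z + s*w)/2 := by ring
lemma awS1' (s t z w : ℂ) (h1 : s*t=1) (h2 : z*w=1) :
    ((s+t)/2) * ((z+w)/2) = ((s*z + t*w)/2 + (t*z + s*w)/2)/2 := by ring
lemma awD2' (s t z w : ℂ) (h1 : s*t=1) (h2 : z*w=1) :
    (2*((s+t)/2)) * ((z+w)/2) * ((s - t) * (z - w) / 2) =
      ((s*z + t*w)/2)^2 - ((t*z + s*w)/2)^2 := by ring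
lemma awS2' (s t z w : ℂ) (h1 : s*t=1) (h2 : z*w=1) :
    (2*((s+t)/2)^2-1) * ((z+w)/2)^2 + (1-((s+t)/2)^2) =
      (((s*z + t*w)/2)^2 + ((t*z + s*w)/2)^2)/2 := by
  linear_combination (((-1:ℂ)/2) + ((1:ℂ)/4) * w^2 + ((1:ℂ)/4) * z^2)*h1 +
    (((-1:ℂ)/2) + ((1:ℂ)/4) * t^2 + ((1:ℂ)/4) * s^2)*h2
lemma awD3' (s t z w : ℂ) (h1 : s*t=1) (h2 : z*w=1) :
    ((4*((s+t)/2)^2-1) * ((z+w)/2)^2 + (1-((s+t)/2)^2)) * ((s - t) * (z - w) / 2) =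
      ((s*z + t*w)/2)^3 - ((t*z + s*w)/2)^3 := by
  linear_combination (((-1:ℂ)/8) * t * w + ((1:ℂ)/8) * t * w^3 + ((1:ℂ)/8) * t * z + ((-1:ℂ)/4) * t * z * w^2 + ((1:ℂ)/4) * t * z^2 * w + ((-1:ℂ)/8) * t * z^3 + ((1:ℂ)/8) * s * w + ((-1:ℂ)/8) * s * w^3 + ((-1:ℂ)/8) * s * z + ((1:ℂ)/4) * s * z * w^2 + ((-1:ℂ)/4) * s * z^2 * w + ((1:ℂ)/8) * s * z^3)*h1 +
    (((-3:ℂ)/8) * t * w + ((3:ℂ)/8) * t * z + ((1:ℂ)/8) * t^3 * w + ((-1:ℂ)/8) * t^3 * z + ((3:ℂ)/8) * s * w + ((-3:ℂ)/8) * s * z + ((-1:ℂ)/8) * s^3 * w + ((1:ℂ)/8) * s^3 * z)*h2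
lemma awS3' (s t z w : ℂ) (h1 : s*t=1) (h2 : z*w=1) :
    (((s+t)/2)*(4*((s+t)/2)^2-3)) * ((z+w)/2)^3 + (3*((s+t)/2)*(1-((s+t)/2)^2)) * ((z+w)/2) =
      (((s*z + t*w)/2)^3 + ((t*z + s*w)/2)^3)/2 := by
  linear_combination (((-9:ℂ)/16) * t * w + ((3:ℂ)/16) * t * w^3 + ((-9:ℂ)/16) * t * z + ((3:ℂ)/8) * t * z * w^2 + ((3:ℂ)/8) * t * z^2 * w + ((3:ℂ)/16) * t * z^3 + ((-9:ℂ)/16) * s * w + ((3:ℂ)/16) * s * w^3 + ((-9:ℂ)/16) * s * z + ((3:ℂ)/8) * s * z * w^2 + ((3:ℂ)/8) * s * z^2 * w + ((3:ℂ)/16) * s * z^3)*h1 +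
    (((-3:ℂ)/16) * t * w + ((-3:ℂ)/16) * t * z + ((3:ℂ)/16) * t^3 * w + ((3:ℂ)/16) * t^3 * z + ((-3:ℂ)/16) * s * w + ((-3:ℂ)/16) * s * z + ((3:ℂ)/16) * s^3 * w + ((3:ℂ)/16) * s^3 * z)*h2

set_option maxHeartbeats 1600000 in
theorem stmt_0 (q : ℝ) (hq0 : 0 < q) (hq1 : q < 1)
    -- `u` is a regular functional with monic OPS `P`
    (u : ℂ[X] →ₗ[ℂ] ℂ) (P : ℕ → ℂ[X])
    (hmonic : ∀ n, (P n).Monic) (hdeg : ∀ n, (P n).natDegree = n)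
    (horth : ∀ n m, n ≠ m → u (P n * P m) = 0)
    (hreg : ∀ n, u (P n ^ 2) ≠ 0)
    -- three-term recurrence coefficients
    (Bs Cs : ℕ → ℂ) (hCne : ∀ n, Cs (n + 1) ≠ 0)
    (hrec0 : (X : ℂ[X]) * P 0 = P 1 + C (Bs 0) * P 0)
    (hrec : ∀ n, (X : ℂ[X]) * P (n + 1) =
      P (n + 2) + C (Bs (n + 1)) * P (n + 1) + C (Cs (n + 1)) * P n)
    -- the Pearson equation `𝐃_q(φ u) = 𝐒_q(ψ u)`
    (φ ψ : ℂ[X]) (hφdeg : φ.degree ≤ 2) (hψmonic : ψ.Monic) (hψdeg : ψ.degree = 1)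
    (hPearson : ∀ f df sf : ℂ[X], AWRel q f df → AvgRel q f sf →
      u (φ * df + ψ * sf) = 0)
    -- the constants `𝔞` and `𝔟`
    (a b : ℂ)
    (ha : a = alphaC q * (3 - 4 * alphaC q ^ 2) / (4 * alphaC q ^ 2 - 1) +
      ((Bs 0 + Bs 1) ^ 2 + 4 * alphaC q ^ 2 * (Cs 1 - Bs 0 * Bs 1 + alphaC q ^ 2 - 1)) /
        (2 * alphaC q * (4 * alphaC q ^ 2 - 1) * Cs 2))
    (hb : b = (a + alphaC q) * Bs 1 - (Bs 0 + Bs 1) / (2 * alphaC q)) :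
    ψ = (X : ℂ[X]) - C (Bs 0) ∧
      φ = (C a * X - C b) * ((X : ℂ[X]) - C (Bs 0)) - C ((a + alphaC q) * Cs 1) := by
  -- basic facts about `sqC` and `alphaC`
  have h0 : 0 < Real.sqrt q := Real.sqrt_pos.mpr hq0
  have h1 : Real.sqrt q < 1 := by
    rw [show (1:ℝ) = Real.sqrt 1 by simp]
    exact Real.sqrt_lt_sqrt hq0.le hq1
  have hinv : Real.sqrt q * (Real.sqrt q)⁻¹ = 1 := mul_inv_cancel₀ h0.ne'
  have hr : (1:ℝ) < (Real.sqrt q + (Real.sqrt q)⁻¹) / 2 := by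
    rw [lt_div_iff₀ (by norm_num)]
    nlinarith [sq_nonneg (Real.sqrt q - 1), mul_pos h0 (inv_pos.mpr h0)]
  have hAr : alphaC q = (((Real.sqrt q + (Real.sqrt q)⁻¹) / 2 : ℝ) : ℂ) := by
    simp [alphaC, sqC]
  have hs : sqC q ≠ 0 := by
    simp only [sqC, ne_eq, Complex.ofReal_eq_zero]; exact h0.ne'
  have hA0 : alphaC q ≠ 0 := by
    rw [hAr]
    exact_mod_cast (by linarith : ((Real.sqrt q + (Real.sqrt q)⁻¹) / 2 : ℝ) ≠ 0)
  have h4A : 4 * alphaC q ^ 2 - 1 ≠ 0 := by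
    rw [hAr]
    have h : (4 * (((Real.sqrt q + (Real.sqrt q)⁻¹) / 2 : ℝ):ℂ) ^ 2 - 1) =
        (((4 * ((Real.sqrt q + (Real.sqrt q)⁻¹) / 2) ^ 2 - 1 : ℝ)):ℂ) := by push_cast; ring
    rw [h]
    exact_mod_cast (by nlinarith : (4 * ((Real.sqrt q + (Real.sqrt q)⁻¹) / 2 : ℝ) ^ 2 - 1) ≠ 0)
  set A := alphaC q with hAdef
  have hA : A = (sqC q + (sqC q)⁻¹) / 2 := by rw [hAdef, alphaC]
  -- the operator relations on low-degree monomials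
  have hD1 : AWRel q 1 0 := by intro z hz; simp
  have hS1 : AvgRel q 1 1 := by intro z hz; simp
  have hDX : AWRel q X 1 := by
    intro z hz; simp only [eval_X, eval_one]
    exact awD1' _ _ _ _ (mul_inv_cancel₀ hs) (mul_inv_cancel₀ hz)
  have hSX : AvgRel q X (C A * X) := by
    intro z hz; simp only [eval_X, eval_mul, eval_C]; rw [hA]
    exact awS1' _ _ _ _ (mul_inv_cancel₀ hs) (mul_inv_cancel₀ hz)
  have hDX2 : AWRel q (X^2) (C (2*A) * X) := by
    intro z hz; simp only [eval_X, eval_mul, eval_C, eval_pow]; rw [hA]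
    exact awD2' _ _ _ _ (mul_inv_cancel₀ hs) (mul_inv_cancel₀ hz)
  have hSX2 : AvgRel q (X^2) (C (2*A^2-1) * X^2 + C (1-A^2)) := by
    intro z hz; simp only [eval_X, eval_mul, eval_C, eval_pow, eval_add]; rw [hA]
    exact awS2' _ _ _ _ (mul_inv_cancel₀ hs) (mul_inv_cancel₀ hz)
  have hDX3 : AWRel q (X^3) (C (4*A^2-1) * X^2 + C (1-A^2)) := by
    intro z hz; simp only [eval_X, eval_mul, eval_C, eval_pow, eval_add]; rw [hA]
    exact awD3' _ _ _ _ (mul_inv_cancel₀ hs) (mul_inv_cancel₀ hz)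
  have hSX3 : AvgRel q (X^3) (C (A*(4*A^2-3)) * X^3 + C (3*A*(1-A^2)) * X) := by
    intro z hz; simp only [eval_X, eval_mul, eval_C, eval_pow, eval_add]; rw [hA]
    exact awS3' _ _ _ _ (mul_inv_cancel₀ hs) (mul_inv_cancel₀ hz)
  -- structure of `P 0`, `P 1`, `P 2`
  have hP0 : P 0 = 1 := (hmonic 0).natDegree_eq_zero.mp (hdeg 0)
  have hP1 : P 1 = X - C (Bs 0) := by
    have h := hrec0; rw [hP0, mul_one, mul_one] at h; linear_combination -h
  have hP2 : P 2 = X^2 - (C (Bs 0) + C (Bs 1)) * X + (C (Bs 0) * C (Bs 1) - C (Cs 1)) := by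
    have h := hrec 0; rw [hP1, hP0, mul_one] at h; linear_combination -h
  -- the functional applied to the `P n`
  have hm0 : u 1 ≠ 0 := by have h := hreg 0; rwa [hP0, one_pow] at h
  have hsm : ∀ (k : ℂ) (p : ℂ[X]), u (C k * p) = k * u p := by
    intro k p; rw [← smul_eq_C_mul, map_smul, smul_eq_mul]
  have hu1 : u (P 1) = 0 := by
    have h := horth 1 0 (by norm_num); rwa [hP0, mul_one] at h
  have hu2 : u (P 2) = 0 := by
    have h := horth 2 0 (by norm_num); rwa [hP0, mul_one] at h
  have hu3 : u (P 3) = 0 := by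
    have h := horth 3 0 (by norm_num); rwa [hP0, mul_one] at h
  have hu4 : u (P 4) = 0 := by
    have h := horth 4 0 (by norm_num); rwa [hP0, mul_one] at h
  have huX1 : u (X * P 1) = Cs 1 * u 1 := by
    have h := congrArg u (hrec 0)
    simp only [map_add, hsm, hu1, hu2, hP0, mul_zero, add_zero, zero_add] at h
    exact h
  have huX2 : u (X * P 2) = 0 := by
    have h := congrArg u (hrec 1)
    simp only [map_add, hsm, hu1, hu2, hu3, mul_zero, add_zero, zero_add] at h
    exact h
  have huX3 : u (X * P 3) = 0 := by
    have h := congrArg u (hrec 2)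
    simp only [map_add, hsm, hu2, hu3, hu4, mul_zero, add_zero, zero_add] at h
    exact h
  have huXX2 : u (X^2 * P 2) = Cs 2 * (Cs 1 * u 1) := by
    have key : (X:ℂ[X])^2 * P 2 = X * P 3 + C (Bs 2) * (X * P 2) + C (Cs 2) * (X * P 1) := by
      linear_combination (X : ℂ[X]) * (hrec 1)
    have h := congrArg u key
    rw [map_add, map_add, hsm, hsm, huX3, huX2, huX1, mul_zero, add_zero, zero_add] at h
    exact h
  -- moments
  have key1 : (X:ℂ[X])^1 = P 1 + C (Bs 0) * 1 := by rw [hP1]; ring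
  have hm1 : u (X^1) = Bs 0 * u 1 := by rw [key1, map_add, hsm, hu1, zero_add]
  have key2 : (X:ℂ[X])^2 = X * P 1 + C (Bs 0) * X^1 := by rw [hP1]; ring
  have hm2 : u (X^2) = (Cs 1 + Bs 0^2) * u 1 := by
    rw [key2, map_add, hsm, huX1, hm1]; ring
  have key3 : (X:ℂ[X])^3 = X * P 2 + C (Bs 0 + Bs 1) * X^2 + C (Cs 1 - Bs 0 * Bs 1) * X^1 := by
    rw [hP2, map_add, map_sub, map_mul]; ring
  have hm3 : u (X^3) =
      ((Bs 0 + Bs 1) * (Cs 1 + Bs 0^2) + (Cs 1 - Bs 0 * Bs 1) * Bs 0) * u 1 := by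
    rw [key3, map_add, map_add, hsm, hsm, huX2, hm2, hm1]; ring
  have key4 : (X:ℂ[X])^4 = X^2 * P 2 + C (Bs 0 + Bs 1) * X^3 + C (Cs 1 - Bs 0 * Bs 1) * X^2 := by
    rw [hP2, map_add, map_sub, map_mul]; ring
  have hm4 : u (X^4) =
      ((Bs 0 + Bs 1) * ((Bs 0 + Bs 1) * (Cs 1 + Bs 0^2) + (Cs 1 - Bs 0 * Bs 1) * Bs 0) +
        (Cs 1 - Bs 0 * Bs 1) * (Cs 1 + Bs 0^2) + Cs 2 * Cs 1) * u 1 := by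
    rw [key4, map_add, map_add, hsm, hsm, huXX2, hm3, hm2]; ring
  -- the representation of ψ and the value of its constant coefficient
  have h1deg : ψ.natDegree = 1 := natDegree_eq_of_degree_eq_some hψdeg
  have hψc1 : ψ.coeff 1 = 1 := by rw [← h1deg]; exact hψmonic.coeff_natDegree
  have hψr : ψ = X^1 + C (ψ.coeff 0) * 1 := by
    have h := eq_X_add_C_of_degree_le_one (hψdeg.le)
    rw [hψc1, C_1, one_mul] at h
    conv_lhs => rw [h]
    ring
  have hc0 := hPearson 1 0 1 hD1 hS1
  rw [mul_zero, zero_add, mul_one, hψr, map_add, hsm, hm1] at hc0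
  have hc : ψ.coeff 0 = -Bs 0 := by
    rcases mul_eq_zero.mp (show (ψ.coeff 0 + Bs 0) * u 1 = 0 by linear_combination hc0) with h | h
    · linear_combination h
    · exact absurd h hm0
  have hψfinal : ψ = X - C (Bs 0) := by rw [hψr, hc, map_neg]; ring
  -- the representation of φ
  set e2 := φ.coeff 2 with he2
  set e1 := φ.coeff 1 with he1
  set e0 := φ.coeff 0 with he0
  have hφr : φ = C e2 * X^2 + C e1 * X^1 + C e0 * 1 := by
    ext n
    rcases n with _|_|_|n
    · simp [he0]
    · simp [he1]
    · simp [he2]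
    · have hz : φ.coeff (n+3) = 0 :=
        coeff_eq_zero_of_degree_lt (hφdeg.trans_lt (by exact_mod_cast (by omega : 2 < n+3)))
      simp [hz, coeff_X_pow]
  -- the three Pearson equations
  have hq2 := hPearson X (1:ℂ[X]) (C A * X) hDX hSX
  have hpoly2 : φ * 1 + ψ * (C A * X) =
      C (e2 + A) * X^2 + C (e1 - A * Bs 0) * X^1 + C e0 * 1 := by
    rw [hφr, hψfinal]
    simp only [map_add, map_sub, map_mul, map_neg, map_one, map_ofNat, map_pow]
    ring
  rw [hpoly2, map_add, map_add, hsm, hsm, hsm, hm2, hm1] at hq2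
  have hq3 := hPearson (X^2) (C (2*A) * X) (C (2*A^2-1) * X^2 + C (1-A^2)) hDX2 hSX2
  have hpoly3 : φ * (C (2*A) * X) + ψ * (C (2*A^2-1) * X^2 + C (1-A^2)) =
      C (2*A*e2 + (2*A^2-1)) * X^3 + C (2*A*e1 - Bs 0*(2*A^2-1)) * X^2 +
        C (2*A*e0 + (1-A^2)) * X^1 + C (-(Bs 0*(1-A^2))) * 1 := by
    rw [hφr, hψfinal]
    simp only [map_add, map_sub, map_mul, map_neg, map_one, map_ofNat, map_pow]
    ring
  rw [hpoly3, map_add, map_add, map_add, hsm, hsm, hsm, hsm, hm3, hm2, hm1] at hq3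
  have hq4 := hPearson (X^3) (C (4*A^2-1) * X^2 + C (1-A^2))
      (C (A*(4*A^2-3)) * X^3 + C (3*A*(1-A^2)) * X) hDX3 hSX3
  have hpoly4 : φ * (C (4*A^2-1) * X^2 + C (1-A^2)) +
      ψ * (C (A*(4*A^2-3)) * X^3 + C (3*A*(1-A^2)) * X) =
      C ((4*A^2-1)*e2 + A*(4*A^2-3)) * X^4 +
        C ((4*A^2-1)*e1 - Bs 0*(A*(4*A^2-3))) * X^3 +
        C ((4*A^2-1)*e0 + (1-A^2)*e2 + 3*A*(1-A^2)) * X^2 +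
        C ((1-A^2)*e1 - Bs 0*(3*A*(1-A^2))) * X^1 + C ((1-A^2)*e0) * 1 := by
    rw [hφr, hψfinal]
    simp only [map_add, map_sub, map_mul, map_neg, map_one, map_ofNat, map_pow]
    ring
  rw [hpoly4, map_add, map_add, map_add, map_add, hsm, hsm, hsm, hsm, hsm,
    hm4, hm3, hm2, hm1] at hq4
  -- nonvanishing quantities
  have hC1 : Cs 1 ≠ 0 := hCne 0
  have hC2 : Cs 2 ≠ 0 := hCne 1
  have hKne : (2*A*Cs 1^2*Cs 2*(4*A^2-1)) * u 1 ≠ 0 :=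
    mul_ne_zero (mul_ne_zero (mul_ne_zero (mul_ne_zero (mul_ne_zero two_ne_zero hA0)
      (pow_ne_zero 2 hC1)) hC2) h4A) hm0
  have hDane : (2*A*(4*A^2-1)*Cs 2) ≠ 0 :=
    mul_ne_zero (mul_ne_zero (mul_ne_zero two_ne_zero hA0) h4A) hC2
  -- solving the linear system
  have G2 : ((2*A*(4*A^2-1)*Cs 2) * e2 - ((1:ℂ) * (Bs 1)^2 + (2:ℂ) * (Bs 0) * (Bs 1) + (1:ℂ) * (Bs 0)^2 + (-4:ℂ) * A^2 + (6:ℂ) * A^2 * (Cs 2) + (4:ℂ) * A^2 * (Cs 1) + (-4:ℂ) * A^2 * (Bs 0) * (Bs 1) + (4:ℂ) * A^4 + (-8:ℂ) * A^4 * (Cs 2))) * ((2*A*Cs 1^2*Cs 2*(4*A^2-1)) * u 1) = 0 := by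
    linear_combination ((4:ℂ) * A^2 * (Cs 1) * (Cs 2) + (-4:ℂ) * A^2 * (Cs 1)^2 * (Cs 2) + (4:ℂ) * A^2 * (Bs 0) * (Bs 1) * (Cs 1) * (Cs 2) + (-20:ℂ) * A^4 * (Cs 1) * (Cs 2) + (32:ℂ) * A^4 * (Cs 1)^2 * (Cs 2) + (-32:ℂ) * A^4 * (Bs 0) * (Bs 1) * (Cs 1) * (Cs 2) + (16:ℂ) * A^6 * (Cs 1) * (Cs 2) + (-64:ℂ) * A^6 * (Cs 1)^2 * (Cs 2) + (64:ℂ) * A^6 * (Bs 0) * (Bs 1) * (Cs 1) * (Cs 2)) * hq2 + ((-2:ℂ) * A * (Bs 1) * (Cs 1) * (Cs 2) + (-2:ℂ) * A * (Bs 0) * (Cs 1) * (Cs 2) + (16:ℂ) * A^3 * (Bs 1) * (Cs 1) * (Cs 2) + (16:ℂ) * A^3 * (Bs 0) * (Cs 1) * (Cs 2) + (-32:ℂ) * A^5 * (Bs 1) * (Cs 1) * (Cs 2) + (-32:ℂ) * A^5 * (Bs 0) * (Cs 1) * (Cs 2)) * hq3 + ((-4:ℂ) * A^2 * (Cs 1)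 * (Cs 2) + (16:ℂ) * A^4 * (Cs 1) * (Cs 2)) * hq4
  have G1 : ((2*A*(4*A^2-1)*Cs 2) * e1 - ((-1:ℂ) * (Bs 1) * (Cs 2) + (-1:ℂ) * (Bs 1)^3 + (-1:ℂ) * (Bs 0) * (Cs 2) + (-3:ℂ) * (Bs 0) * (Bs 1)^2 + (-3:ℂ) * (Bs 0)^2 * (Bs 1) + (-1:ℂ) * (Bs 0)^3 + (4:ℂ) * A^2 * (Bs 1) + (-4:ℂ) * A^2 * (Bs 1) * (Cs 1) + (4:ℂ) * A^2 * (Bs 0) + (-2:ℂ) * A^2 * (Bs 0) * (Cs 2) + (-4:ℂ) * A^2 * (Bs 0) * (Cs 1) + (4:ℂ) * A^2 * (Bs 0) * (Bs 1)^2 + (4:ℂ) * A^2 * (Bs 0)^2 * (Bs 1) + (-4:ℂ) * A^4 * (Bs 1) + (-4:ℂ) * A^4 * (Bs 0) + (8:ℂ) * A^4 * (Bs 0) * (Cs 2))) * ((2*A*Cs 1^2*Cs 2*(4*A^2-1)) * u 1) = 0 := by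
    linear_combination ((-4:ℂ) * A^2 * (Bs 1) * (Cs 1) * (Cs 2) + (4:ℂ) * A^2 * (Bs 1) * (Cs 1)^2 * (Cs 2) + (-4:ℂ) * A^2 * (Bs 0) * (Cs 1) * (Cs 2) + (-4:ℂ) * A^2 * (Bs 0) * (Cs 1) * (Cs 2)^2 + (4:ℂ) * A^2 * (Bs 0) * (Cs 1)^2 * (Cs 2) + (-4:ℂ) * A^2 * (Bs 0) * (Bs 1)^2 * (Cs 1) * (Cs 2) + (-4:ℂ) * A^2 * (Bs 0)^2 * (Bs 1) * (Cs 1) * (Cs 2) + (20:ℂ) * A^4 * (Bs 1) * (Cs 1) * (Cs 2) + (-32:ℂ) * A^4 * (Bs 1) * (Cs 1)^2 * (Cs 2) + (20:ℂ) * A^4 * (Bs 0) * (Cs 1) * (Cs 2) + (32:ℂ) * A^4 * (Bs 0) * (Cs 1) * (Cs 2)^2 + (-32:ℂ) * A^4 * (Bs 0) * (Cs 1)^2 * (Cs 2) + (32:ℂ) * A^4 * (Bs 0) * (Bs 1)^2 * (Cs 1) * (Cs 2) + (32:ℂ) * A^4 * (Bs 0)^2 * (Bs 1) * (Cs 1)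 * (Cs 2) + (-16:ℂ) * A^6 * (Bs 1) * (Cs 1) * (Cs 2) + (64:ℂ) * A^6 * (Bs 1) * (Cs 1)^2 * (Cs 2) + (-16:ℂ) * A^6 * (Bs 0) * (Cs 1) * (Cs 2) + (-64:ℂ) * A^6 * (Bs 0) * (Cs 1) * (Cs 2)^2 + (64:ℂ) * A^6 * (Bs 0) * (Cs 1)^2 * (Cs 2) + (-64:ℂ) * A^6 * (Bs 0) * (Bs 1)^2 * (Cs 1) * (Cs 2) + (-64:ℂ) * A^6 * (Bs 0)^2 * (Bs 1) * (Cs 1) * (Cs 2)) * hq2 + ((2:ℂ) * A * (Cs 1) * (Cs 2)^2 + (2:ℂ) * A * (Bs 1)^2 * (Cs 1) * (Cs 2) + (4:ℂ) * A * (Bs 0) * (Bs 1) * (Cs 1) * (Cs 2) + (2:ℂ) * A * (Bs 0)^2 * (Cs 1) * (Cs 2) + (-16:ℂ) * A^3 * (Cs 1) * (Cs 2)^2 + (-16:ℂ) * A^3 * (Bs 1)^2 * (Cs 1) * (Cs 2) + (-32:ℂ) * A^3 * (Bs 0) * (Bs 1) * (Cs 1) * (Cs 2) + (-16:ℂ)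 * A^3 * (Bs 0)^2 * (Cs 1) * (Cs 2) + (32:ℂ) * A^5 * (Cs 1) * (Cs 2)^2 + (32:ℂ) * A^5 * (Bs 1)^2 * (Cs 1) * (Cs 2) + (64:ℂ) * A^5 * (Bs 0) * (Bs 1) * (Cs 1) * (Cs 2) + (32:ℂ) * A^5 * (Bs 0)^2 * (Cs 1) * (Cs 2)) * hq3 + ((4:ℂ) * A^2 * (Bs 1) * (Cs 1) * (Cs 2) + (4:ℂ) * A^2 * (Bs 0) * (Cs 1) * (Cs 2) + (-16:ℂ) * A^4 * (Bs 1) * (Cs 1) * (Cs 2) + (-16:ℂ) * A^4 * (Bs 0) * (Cs 1) * (Cs 2)) * hq4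
  have G0 : ((2*A*(4*A^2-1)*Cs 2) * e0 - ((-1:ℂ) * (Bs 1)^2 * (Cs 1) + (1:ℂ) * (Bs 0) * (Bs 1) * (Cs 2) + (-2:ℂ) * (Bs 0) * (Bs 1) * (Cs 1) + (1:ℂ) * (Bs 0) * (Bs 1)^3 + (1:ℂ) * (Bs 0)^2 * (Cs 2) + (-1:ℂ) * (Bs 0)^2 * (Cs 1) + (2:ℂ) * (Bs 0)^2 * (Bs 1)^2 + (1:ℂ) * (Bs 0)^3 * (Bs 1) + (4:ℂ) * A^2 * (Cs 1) + (-4:ℂ) * A^2 * (Cs 1) * (Cs 2) + (-4:ℂ) * A^2 * (Cs 1)^2 + (-4:ℂ) * A^2 * (Bs 0) * (Bs 1) + (8:ℂ) * A^2 * (Bs 0) * (Bs 1) * (Cs 1) + (-4:ℂ) * A^2 * (Bs 0)^2 * (Cs 2) + (-4:ℂ) * A^2 * (Bs 0)^2 * (Bs 1)^2 + (-4:ℂ) * A^4 * (Cs 1) + (4:ℂ) * A^4 * (Bs 0) * (Bs 1))) * ((2*A*Cs 1^2*Cs 2*(4*A^2-1)) * u 1) = 0 := by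
    linear_combination ((-4:ℂ) * A^2 * (Cs 1)^2 * (Cs 2) + (4:ℂ) * A^2 * (Cs 1)^2 * (Cs 2)^2 + (4:ℂ) * A^2 * (Cs 1)^3 * (Cs 2) + (4:ℂ) * A^2 * (Bs 0) * (Bs 1) * (Cs 1) * (Cs 2) + (-8:ℂ) * A^2 * (Bs 0) * (Bs 1) * (Cs 1)^2 * (Cs 2) + (4:ℂ) * A^2 * (Bs 0)^2 * (Cs 1) * (Cs 2)^2 + (4:ℂ) * A^2 * (Bs 0)^2 * (Bs 1)^2 * (Cs 1) * (Cs 2) + (20:ℂ) * A^4 * (Cs 1)^2 * (Cs 2) + (-32:ℂ) * A^4 * (Cs 1)^2 * (Cs 2)^2 + (-32:ℂ) * A^4 * (Cs 1)^3 * (Cs 2) + (-20:ℂ) * A^4 * (Bs 0) * (Bs 1) * (Cs 1) * (Cs 2) + (64:ℂ) * A^4 * (Bs 0) * (Bs 1) * (Cs 1)^2 * (Cs 2) + (-32:ℂ) * A^4 * (Bs 0)^2 * (Cs 1) * (Cs 2)^2 + (-32:ℂ) * A^4 * (Bs 0)^2 * (Bs 1)^2 * (Cs 1) * (Cs 2)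 + (-16:ℂ) * A^6 * (Cs 1)^2 * (Cs 2) + (64:ℂ) * A^6 * (Cs 1)^2 * (Cs 2)^2 + (64:ℂ) * A^6 * (Cs 1)^3 * (Cs 2) + (16:ℂ) * A^6 * (Bs 0) * (Bs 1) * (Cs 1) * (Cs 2) + (-128:ℂ) * A^6 * (Bs 0) * (Bs 1) * (Cs 1)^2 * (Cs 2) + (64:ℂ) * A^6 * (Bs 0)^2 * (Cs 1) * (Cs 2)^2 + (64:ℂ) * A^6 * (Bs 0)^2 * (Bs 1)^2 * (Cs 1) * (Cs 2)) * hq2 + ((2:ℂ) * A * (Bs 1) * (Cs 1)^2 * (Cs 2) + (-2:ℂ) * A * (Bs 0) * (Cs 1) * (Cs 2)^2 + (2:ℂ) * A * (Bs 0) * (Cs 1)^2 * (Cs 2) + (-2:ℂ) * A * (Bs 0) * (Bs 1)^2 * (Cs 1) * (Cs 2) + (-2:ℂ) * A * (Bs 0)^2 * (Bs 1) * (Cs 1) * (Cs 2) + (-16:ℂ) * A^3 * (Bs 1) * (Cs 1)^2 * (Cs 2) + (16:ℂ) * A^3 * (Bs 0) * (Cs 1) * (Cs 2)^2 + (-16:ℂ)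 * A^3 * (Bs 0) * (Cs 1)^2 * (Cs 2) + (16:ℂ) * A^3 * (Bs 0) * (Bs 1)^2 * (Cs 1) * (Cs 2) + (16:ℂ) * A^3 * (Bs 0)^2 * (Bs 1) * (Cs 1) * (Cs 2) + (32:ℂ) * A^5 * (Bs 1) * (Cs 1)^2 * (Cs 2) + (-32:ℂ) * A^5 * (Bs 0) * (Cs 1) * (Cs 2)^2 + (32:ℂ) * A^5 * (Bs 0) * (Cs 1)^2 * (Cs 2) + (-32:ℂ) * A^5 * (Bs 0) * (Bs 1)^2 * (Cs 1) * (Cs 2) + (-32:ℂ) * A^5 * (Bs 0)^2 * (Bs 1) * (Cs 1) * (Cs 2)) * hq3 + ((4:ℂ) * A^2 * (Cs 1)^2 * (Cs 2) + (-4:ℂ) * A^2 * (Bs 0) * (Bs 1) * (Cs 1) * (Cs 2) + (-16:ℂ) * A^4 * (Cs 1)^2 * (Cs 2) + (16:ℂ) * A^4 * (Bs 0) * (Bs 1) * (Cs 1) * (Cs 2)) * hq4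
  have he2N : (2*A*(4*A^2-1)*Cs 2) * e2 = ((1:ℂ) * (Bs 1)^2 + (2:ℂ) * (Bs 0) * (Bs 1) + (1:ℂ) * (Bs 0)^2 + (-4:ℂ) * A^2 + (6:ℂ) * A^2 * (Cs 2) + (4:ℂ) * A^2 * (Cs 1) + (-4:ℂ) * A^2 * (Bs 0) * (Bs 1) + (4:ℂ) * A^4 + (-8:ℂ) * A^4 * (Cs 2)) := by
    rcases mul_eq_zero.mp G2 with h | h
    · linear_combination h
    · exact absurd h hKne
  have he1N : (2*A*(4*A^2-1)*Cs 2) * e1 = ((-1:ℂ) * (Bs 1) * (Cs 2) + (-1:ℂ) * (Bs 1)^3 + (-1:ℂ) * (Bs 0) * (Cs 2) + (-3:ℂ) * (Bs 0) * (Bs 1)^2 + (-3:ℂ) * (Bs 0)^2 * (Bs 1) + (-1:ℂ) * (Bs 0)^3 + (4:ℂ) * A^2 * (Bs 1) + (-4:ℂ) * A^2 * (Bs 1) * (Cs 1) + (4:ℂ) * A^2 * (Bs 0) + (-2:ℂ) * A^2 * (Bs 0) * (Cs 2) + (-4:ℂ) * A^2 * (Bs 0) * (Cs 1) + (4:ℂ)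 * A^2 * (Bs 0) * (Bs 1)^2 + (4:ℂ) * A^2 * (Bs 0)^2 * (Bs 1) + (-4:ℂ) * A^4 * (Bs 1) + (-4:ℂ) * A^4 * (Bs 0) + (8:ℂ) * A^4 * (Bs 0) * (Cs 2)) := by
    rcases mul_eq_zero.mp G1 with h | h
    · linear_combination h
    · exact absurd h hKne
  have he0N : (2*A*(4*A^2-1)*Cs 2) * e0 = ((-1:ℂ) * (Bs 1)^2 * (Cs 1) + (1:ℂ) * (Bs 0) * (Bs 1) * (Cs 2) + (-2:ℂ) * (Bs 0) * (Bs 1) * (Cs 1) + (1:ℂ) * (Bs 0) * (Bs 1)^3 + (1:ℂ) * (Bs 0)^2 * (Cs 2) + (-1:ℂ) * (Bs 0)^2 * (Cs 1) + (2:ℂ) * (Bs 0)^2 * (Bs 1)^2 + (1:ℂ) * (Bs 0)^3 * (Bs 1) + (4:ℂ) * A^2 * (Cs 1) + (-4:ℂ) * A^2 * (Cs 1) * (Cs 2) + (-4:ℂ) * A^2 * (Cs 1)^2 + (-4:ℂ) * A^2 * (Bs 0) * (Bs 1) + (8:ℂ) * A^2 * (Bs 0) * (Bs 1) * (Cs 1)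 + (-4:ℂ) * A^2 * (Bs 0)^2 * (Cs 2) + (-4:ℂ) * A^2 * (Bs 0)^2 * (Bs 1)^2 + (-4:ℂ) * A^4 * (Cs 1) + (4:ℂ) * A^4 * (Bs 0) * (Bs 1)) := by
    rcases mul_eq_zero.mp G0 with h | h
    · linear_combination h
    · exact absurd h hKne
  -- identifying with `a` and `b`
  have haNa : (2*A*(4*A^2-1)*Cs 2) * a = ((1:ℂ) * (Bs 1)^2 + (2:ℂ) * (Bs 0) * (Bs 1) + (1:ℂ) * (Bs 0)^2 + (-4:ℂ) * A^2 + (6:ℂ) * A^2 * (Cs 2) + (4:ℂ) * A^2 * (Cs 1) + (-4:ℂ) * A^2 * (Bs 0) * (Bs 1) + (4:ℂ) * A^4 + (-8:ℂ) * A^4 * (Cs 2)) := by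
    rw [ha]; rw [eq_comm, ← sub_eq_zero]; field_simp; ring
  have hbNb : (2*A*(4*A^2-1)*Cs 2) * b = ((1:ℂ) * (Bs 1) * (Cs 2) + (1:ℂ) * (Bs 1)^3 + (1:ℂ) * (Bs 0) * (Cs 2) + (2:ℂ) * (Bs 0) * (Bs 1)^2 + (1:ℂ) * (Bs 0)^2 * (Bs 1) + (-4:ℂ) * A^2 * (Bs 1) + (4:ℂ) * A^2 * (Bs 1) * (Cs 1) + (-4:ℂ) * A^2 * (Bs 0) * (Cs 2) + (-4:ℂ) * A^2 * (Bs 0) * (Bs 1)^2 + (4:ℂ) * A^4 * (Bs 1)) := by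
    rw [hb, ha]; rw [eq_comm, ← sub_eq_zero]; field_simp; ring
  have ge2 : e2 = a := mul_left_cancel₀ hDane (he2N.trans haNa.symm)
  have ge1 : e1 = -(a * Bs 0 + b) := by
    apply mul_left_cancel₀ hDane
    linear_combination he1N + Bs 0 * haNa + hbNb
  have ge0 : e0 = b * Bs 0 - (a + A) * Cs 1 := by
    apply mul_left_cancel₀ hDane
    linear_combination he0N + (-(Bs 0)) * hbNb + Cs 1 * haNa
  refine ⟨hψfinal, ?_⟩
  rw [hφr, ge2, ge1, ge0]
  simp only [map_add, map_sub, map_mul, map_neg]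
  ring
end

section
/- Let 0 < q < 1, set α = (q^{1/2} + q^{-1/2})/2, and let a and b be nonzero complex numbers both different from one. Define B_n = 0 and C_{n+1} = (1 − aq^{n+1})(1 − bq^{n+1})/4 for all n ≥ 0. Then there exist complex numbers â and b̂, not both zero, such that, setting r_n = âq^n + b̂q^{−n}, the following hold: r_{n+3}B_{n+2} − (r_{n+2} + r_{n+1})B_{n+1} + r_nB_n = 0 for all n ≥ 0, and r_n(B_n − qB_{n−1})(B_n − q^{−1}B_{n−1}) = (r_{n+1} + r_{n+2})(C_{n+1} − 1/4) − 4α²r_n(C_n − 1/4) + (r_{n−1} + r_{n−2})(C_{n−1} − 1/4) for all n ≥ 2. -/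
open Polynomial

theorem stmt_5 (q : ℝ) (hq0 : 0 < q) (hq1 : q < 1)
    (a b : ℂ) (ha0 : a ≠ 0) (hb0 : b ≠ 0) (ha1 : a ≠ 1) (hb1 : b ≠ 1)
    (Bs Cs : ℕ → ℂ)
    (hBs : ∀ n : ℕ, Bs n = 0)
    (hCs : ∀ n : ℕ, Cs (n + 1) = (1 - a * (q : ℂ) ^ (n + 1)) * (1 - b * (q : ℂ) ^ (n + 1)) / 4) :
    ∃ ah bh : ℂ, ¬(ah = 0 ∧ bh = 0) ∧
      ∀ r : ℕ → ℂ, (∀ n, r n = ah * (q : ℂ) ^ n + bh * ((q : ℂ) ^ n)⁻¹) →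
        (∀ n, r (n + 3) * Bs (n + 2) - (r (n + 2) + r (n + 1)) * Bs (n + 1) +
          r n * Bs n = 0) ∧
        (∀ n, 2 ≤ n →
          r n * (Bs n - (q : ℂ) * Bs (n - 1)) * (Bs n - (q : ℂ)⁻¹ * Bs (n - 1)) =
            (r (n + 1) + r (n + 2)) * (Cs (n + 1) - 1 / 4) -
              4 * alphaC q ^ 2 * r n * (Cs n - 1 / 4) +
              (r (n - 1) + r (n - 2)) * (Cs (n - 1) - 1 / 4)) := by
  have hqC : (q : ℂ) ≠ 0 := by
    exact_mod_cast ne_of_gt hq0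
  have hs2 : sqC q ^ 2 = (q : ℂ) := by
    rw [sqC, ← Complex.ofReal_pow, Real.sq_sqrt hq0.le]
  have hs0 : sqC q ≠ 0 := by
    intro h
    rw [h] at hs2
    simp at hs2
    exact hqC hs2.symm
  have halpha : 4 * alphaC q ^ 2 = (q : ℂ) + 2 + (q : ℂ)⁻¹ := by
    have h1 : 4 * alphaC q ^ 2 = sqC q ^ 2 + 2 + (sqC q ^ 2)⁻¹ := by
      rw [alphaC]
      field_simp
      ring
    rw [h1, hs2]
  refine ⟨0, 1, by simp, ?_⟩
  intro r hr
  constructor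
  · intro n
    simp [hBs]
  · intro n hn
    obtain ⟨m, rfl⟩ : ∃ m, n = m + 2 := ⟨n - 2, by omega⟩
    simp only [hBs, show m + 2 - 1 = m + 1 from rfl, show m + 2 - 2 = m from rfl,
      show m + 2 + 1 = m + 3 from rfl] at *
    rw [hr (m + 2), hr (m + 3), hr (m + 4), hr (m + 1), hr m,
      show Cs (m + 3) = _ from hCs (m + 2), show Cs (m + 2) = _ from hCs (m + 1),
      show Cs (m + 1) = _ from hCs m, halpha]
    have hqm : (q:ℂ) ^ m ≠ 0 := pow_ne_zero _ hqC
    simp only [pow_succ, mul_inv]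
    generalize hx : (q:ℂ) ^ m = x
    rw [hx] at hqm
    have h1 : x * x⁻¹ = 1 := mul_inv_cancel₀ hqm
    have h2 : (q:ℂ) * (q:ℂ)⁻¹ = 1 := mul_inv_cancel₀ hqC
    linear_combination (-1 : ℂ) * (((-1 : ℂ)/4) * (q:ℂ) * b + ((-1 : ℂ)/4) * (q:ℂ) * a + ((-1 : ℂ)/4) * (q:ℂ) * (q:ℂ)⁻¹ * b + ((-1 : ℂ)/4) * (q:ℂ) * (q:ℂ)⁻¹ * a + ((1 : ℂ)/2) * (q:ℂ) ^ 2 * (q:ℂ)⁻¹ ^ 2 * b + ((1 : ℂ)/2) * (q:ℂ) ^ 2 * (q:ℂ)⁻¹ ^ 2 * a + ((1 : ℂ)/4) * (q:ℂ) ^ 2 * (q:ℂ)⁻¹ ^ 3 * b + ((1 : ℂ)/4) * (q:ℂ) ^ 2 * (q:ℂ)⁻¹ ^ 3 * a + ((1 : ℂ)/4) * (q:ℂ) ^ 3 * (q:ℂ)⁻¹ ^ 2 * b + ((1 : ℂ)/4) * (q:ℂ) ^ 3 * (q:ℂ)⁻¹ ^ 2 * a + ((-1 : ℂ)/4) * (q:ℂ)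 ^ 3 * (q:ℂ)⁻¹ ^ 3 * b + ((-1 : ℂ)/4) * (q:ℂ) ^ 3 * (q:ℂ)⁻¹ ^ 3 * a + ((-1 : ℂ)/4) * (q:ℂ) ^ 3 * (q:ℂ)⁻¹ ^ 4 * b + ((-1 : ℂ)/4) * (q:ℂ) ^ 3 * (q:ℂ)⁻¹ ^ 4 * a + ((1 : ℂ)/4) * x * (q:ℂ) ^ 2 * a * b + ((1 : ℂ)/4) * x * (q:ℂ) ^ 2 * (q:ℂ)⁻¹ * a * b + ((-1 : ℂ)/2) * x * (q:ℂ) ^ 4 * (q:ℂ)⁻¹ ^ 2 * a * b + ((-1 : ℂ)/4) * x * (q:ℂ) ^ 4 * (q:ℂ)⁻¹ ^ 3 * a * b + ((-1 : ℂ)/4) * x * (q:ℂ) ^ 5 * (q:ℂ)⁻¹ ^ 2 * a * b + ((1 : ℂ)/4) * x * (q:ℂ) ^ 6 * (q:ℂ)⁻¹ ^ 3 * a * b + ((1 : ℂ)/4) * x * (q:ℂ) ^ 6 * (q:ℂ)⁻¹ ^ 4 * a * b) * h1 + (-1 : ℂ) * (((1 : ℂ)/4) * (q:ℂ) * b + ((1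 : ℂ)/4) * (q:ℂ) * a + ((1 : ℂ)/4) * (q:ℂ) * (q:ℂ)⁻¹ * b + ((1 : ℂ)/4) * (q:ℂ) * (q:ℂ)⁻¹ * a + ((1 : ℂ)/4) * (q:ℂ) ^ 2 * (q:ℂ)⁻¹ * b + ((1 : ℂ)/4) * (q:ℂ) ^ 2 * (q:ℂ)⁻¹ * a + ((-1 : ℂ)/4) * (q:ℂ) ^ 2 * (q:ℂ)⁻¹ ^ 2 * b + ((-1 : ℂ)/4) * (q:ℂ) ^ 2 * (q:ℂ)⁻¹ ^ 2 * a + ((-1 : ℂ)/4) * (q:ℂ) ^ 2 * (q:ℂ)⁻¹ ^ 3 * b + ((-1 : ℂ)/4) * (q:ℂ) ^ 2 * (q:ℂ)⁻¹ ^ 3 * a + ((-1 : ℂ)/4) * x * (q:ℂ) ^ 2 * a * b + ((-1 : ℂ)/4) * x * (q:ℂ) ^ 2 * (q:ℂ)⁻¹ * a * b + ((-1 : ℂ)/4) * x * (q:ℂ) ^ 3 * (q:ℂ)⁻¹ * a * b + ((-1 : ℂ)/4) * x * (q:ℂ) ^ 3 * (q:ℂ)⁻¹ ^ 2 * a * b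 + ((1 : ℂ)/4) * x * (q:ℂ) ^ 4 * (q:ℂ)⁻¹ ^ 2 * a * b + ((1 : ℂ)/4) * x * (q:ℂ) ^ 5 * (q:ℂ)⁻¹ ^ 2 * a * b + ((1 : ℂ)/4) * x * (q:ℂ) ^ 5 * (q:ℂ)⁻¹ ^ 3 * a * b) * h2
end
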